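/- Fix 1 ≤ p < r ≤ ∞ and set γ = 1/p − 1/r. Let W be a symmetric n×n matrix whose only nonzero entries are W_{2k−1,2k} = W_{2k,2k−1} = c_k for k ∈ [m] with 2m ≤ n. Then ‖W‖_{r→p} = ( 2 Σ_{k=1}^m |c_k|^{1/γ} )^{γ}. -/

import Mathlib

/-!
`W` acts as `x ↦ (d j * x (σ j))_j`, where `σ` swaps `2k ↔ 2k+1` and `d j = c ⌊j/2⌋` for `j < 2m`.
Permuting coordinates preserves every `ℓ_q` norm, so `‖W‖_{r→p}` is the `r → p` norm of the
diagonal matrix `diag d`. By Hölder's inequality with `1/p = 1/s + 1/r`, i.e. `s = 1/γ`, this is at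
most `‖d‖_s`, and the equality case `x_j ∝ |d_j|^{s/r}` shows it is exactly `‖d‖_s`.
Each `c_k` occurs twice in `d`, which gives the factor `2`.
-/

open Matrix ENNReal

/-- The ℓ_q norm on ℝⁿ for an extended-real exponent `q ∈ [1,∞]`. -/
noncomputable def lnorm {n : ℕ} (q : ℝ≥0∞) (x : Fin n → ℝ) : ℝ :=
  if q = ⊤ then ⨆ i, |x i| else (∑ i, |x i| ^ q.toReal) ^ (1 / q.toReal)

/-- The `r → p` operator norm of an `n × n` real matrix. -/
noncomputable def opNorm {n : ℕ} (r p : ℝ≥0∞) (A : Matrix (Fin n) (Fin n) ℝ) : ℝ :=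
  sSup {c | ∃ x : Fin n → ℝ, lnorm r x ≤ 1 ∧ c = lnorm p (A.mulVec x)}

open Finset

section HolderSums

variable {ι : Type*} [Fintype ι] {P R : ℝ}

theorem holderTriple_inv_sub_inv (hP : 0 < P) (hPR : P < R) :
    (P⁻¹ - R⁻¹)⁻¹.HolderTriple R P :=
  ⟨by rw [inv_inv]; ring, inv_pos.2 (sub_pos.2 (inv_strictAnti₀ hP hPR)), hP.trans hPR⟩

theorem sum_abs_mul_rpow_le (hP : 0 < P) (hPR : P < R) (d x : ι → ℝ) :
    ∑ i, |d i * x i| ^ P ≤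
      (∑ i, |d i| ^ (P⁻¹ - R⁻¹)⁻¹) ^ (P * (P⁻¹ - R⁻¹)) * (∑ i, |x i| ^ R) ^ (P / R) := by
  simpa only [abs_mul, div_inv_eq_mul] using
    Real.Lr_rpow_le_Lp_mul_Lq_of_nonneg univ (holderTriple_inv_sub_inv hP hPR)
      (f := fun i => |d i|) (g := fun i => |x i|) (fun i _ => abs_nonneg _)
      (fun i _ => abs_nonneg _)

/-- The maximiser of `x ↦ ∑ |d i * x i| ^ P` on the unit sphere of `ℓ^R`. -/
noncomputable def holderExtremal (P R : ℝ) (d : ι → ℝ) (i : ι) : ℝ :=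
  (|d i| ^ (P⁻¹ - R⁻¹)⁻¹ / ∑ j, |d j| ^ (P⁻¹ - R⁻¹)⁻¹) ^ R⁻¹

theorem holderExtremal_nonneg (d : ι → ℝ) (i : ι) : 0 ≤ holderExtremal P R d i := by
  unfold holderExtremal
  exact Real.rpow_nonneg (div_nonneg (by positivity) (sum_nonneg fun j _ => by positivity)) _

theorem sum_holderExtremal_rpow (hR : R ≠ 0) (d : ι → ℝ)
    (hS : ∑ i, |d i| ^ (P⁻¹ - R⁻¹)⁻¹ ≠ 0) :
    ∑ i, |holderExtremal P R d i| ^ R = 1 := by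
  simp_rw [abs_of_nonneg (holderExtremal_nonneg d _), holderExtremal]
  simp_rw [← Real.rpow_mul (div_nonneg (Real.rpow_nonneg (abs_nonneg _) _)
    (sum_nonneg fun j _ => Real.rpow_nonneg (abs_nonneg _) _)), inv_mul_cancel₀ hR,
    Real.rpow_one, ← sum_div, div_self hS]

theorem sum_abs_mul_holderExtremal_rpow (hP : 0 < P) (hPR : P < R) (d : ι → ℝ)
    (hS : 0 < ∑ i, |d i| ^ (P⁻¹ - R⁻¹)⁻¹) :
    ∑ i, |d i * holderExtremal P R d i| ^ P =
      (∑ i, |d i| ^ (P⁻¹ - R⁻¹)⁻¹) ^ (P * (P⁻¹ - R⁻¹)) := by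
  set S := ∑ i, |d i| ^ (P⁻¹ - R⁻¹)⁻¹
  have hs : 0 < (P⁻¹ - R⁻¹)⁻¹ := (holderTriple_inv_sub_inv hP hPR).left_pos
  have hexp : P + (P⁻¹ - R⁻¹)⁻¹ * (R⁻¹ * P) = (P⁻¹ - R⁻¹)⁻¹ := by
    have : R - P ≠ 0 := (sub_pos.2 hPR).ne'
    have : P ≠ 0 := hP.ne'
    have : R ≠ 0 := (hP.trans hPR).ne'
    field_simp
    ring
  have hterm : ∀ i, |d i * holderExtremal P R d i| ^ P =
      |d i| ^ (P⁻¹ - R⁻¹)⁻¹ / S ^ (R⁻¹ * P) := by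
    intro i
    rw [abs_mul, abs_of_nonneg (holderExtremal_nonneg d i), holderExtremal,
      Real.mul_rpow (abs_nonneg _) (by positivity), ← Real.rpow_mul (by positivity),
      Real.div_rpow (by positivity) hS.le, ← Real.rpow_mul (abs_nonneg _), mul_div_assoc',
      ← Real.rpow_add' (abs_nonneg _) (by rw [hexp]; exact hs.ne'), hexp]
  have hlt : R⁻¹ * P < 1 := (inv_mul_lt_one₀ (hP.trans hPR)).2 hPR
  rw [sum_congr rfl fun i _ => hterm i, ← sum_div, ← Real.rpow_one_sub' hS.le (by linarith)]
  congr 1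
  field_simp

end HolderSums

theorem Real.rpow_mul_rpow_one_div {x : ℝ} (hx : 0 ≤ x) {P : ℝ} (hP : P ≠ 0) (y : ℝ) :
    (x ^ (P * y)) ^ (1 / P) = x ^ y := by
  rw [← Real.rpow_mul hx, mul_comm P, mul_assoc, mul_one_div_cancel hP, mul_one]

section lnorm

variable {n : ℕ}

theorem lnorm_of_ne_top {q : ℝ≥0∞} (hq : q ≠ ⊤) (x : Fin n → ℝ) :
    lnorm q x = (∑ i, |x i| ^ q.toReal) ^ (1 / q.toReal) := if_neg hq

theorem lnorm_top (x : Fin n → ℝ) : lnorm ⊤ x = ⨆ i, |x i| := if_pos rfl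

theorem lnorm_comp_perm (q : ℝ≥0∞) (σ : Equiv.Perm (Fin n)) (x : Fin n → ℝ) :
    lnorm q (x ∘ σ) = lnorm q x := by
  unfold lnorm
  split_ifs
  · exact σ.iSup_comp (g := fun i => |x i|)
  · simp only [Function.comp_apply]
    rw [Equiv.sum_comp σ (fun i => |x i| ^ q.toReal)]

theorem lnorm_top_le_one_iff (x : Fin n → ℝ) : lnorm ⊤ x ≤ 1 ↔ ∀ i, |x i| ≤ 1 := by
  rw [lnorm_top]
  exact ⟨fun h i => (le_ciSup (Set.finite_range _).bddAbove i).trans h,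
    fun h => Real.iSup_le h zero_le_one⟩

theorem lnorm_le_one_iff {q : ℝ≥0∞} (hq0 : q ≠ 0) (hq : q ≠ ⊤) (x : Fin n → ℝ) :
    lnorm q x ≤ 1 ↔ ∑ i, |x i| ^ q.toReal ≤ 1 := by
  rw [lnorm_of_ne_top hq, one_div, Real.rpow_inv_le_iff_of_pos (by positivity) zero_le_one
    (ENNReal.toReal_pos hq0 hq), Real.one_rpow]

theorem lnorm_mul_le_mul_lnorm {p r : ℝ≥0∞} (hp : p ≠ 0) (hpr : p < r) (d x : Fin n → ℝ) :
    lnorm p (fun i => d i * x i) ≤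
      (∑ i, |d i| ^ (1 / ((p⁻¹).toReal - (r⁻¹).toReal))) ^ ((p⁻¹).toReal - (r⁻¹).toReal) *
        lnorm r x := by
  have hP : 0 < p.toReal := ENNReal.toReal_pos hp hpr.ne_top
  rw [lnorm_of_ne_top hpr.ne_top]
  rcases eq_or_ne r ⊤ with rfl | hr
  · have hx : ∀ i, |x i| ≤ ⨆ j, |x j| := le_ciSup (Set.finite_range _).bddAbove
    have hx0 : 0 ≤ ⨆ j, |x j| := Real.iSup_nonneg fun j => abs_nonneg _
    rw [lnorm_top, inv_top, toReal_zero, sub_zero, toReal_inv, one_div (p.toReal⁻¹), inv_inv,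
      ← one_div]
    calc (∑ i, |d i * x i| ^ p.toReal) ^ (1 / p.toReal)
        ≤ (∑ i, |d i| ^ p.toReal * (⨆ j, |x j|) ^ p.toReal) ^ (1 / p.toReal) := by
          gcongr with i
          rw [abs_mul, Real.mul_rpow (abs_nonneg _) (abs_nonneg _)]
          gcongr
          exact hx i
      _ = (∑ i, |d i| ^ p.toReal) ^ (1 / p.toReal) * ⨆ j, |x j| := by
          rw [← sum_mul, Real.mul_rpow (by positivity) (by positivity),
            one_div, Real.rpow_rpow_inv hx0 hP.ne']
  · have hPR : p.toReal < r.toReal := (ENNReal.toReal_lt_toReal hpr.ne_top hr).2 hpr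
    rw [lnorm_of_ne_top hr, toReal_inv, toReal_inv, one_div (_ - _)]
    calc (∑ i, |d i * x i| ^ p.toReal) ^ (1 / p.toReal)
        ≤ ((∑ i, |d i| ^ (p.toReal⁻¹ - r.toReal⁻¹)⁻¹) ^ (p.toReal * (p.toReal⁻¹ - r.toReal⁻¹)) *
            (∑ i, |x i| ^ r.toReal) ^ (p.toReal / r.toReal)) ^ (1 / p.toReal) := by
          gcongr
          exact sum_abs_mul_rpow_le hP hPR d x
      _ = _ := by
          rw [Real.mul_rpow (by positivity) (by positivity),
            Real.rpow_mul_rpow_one_div (by positivity) hP.ne', div_eq_mul_one_div,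
            Real.rpow_mul_rpow_one_div (by positivity) hP.ne']

theorem exists_lnorm_le_one_lnorm_mul_eq {p r : ℝ≥0∞} (hp : p ≠ 0) (hpr : p < r)
    (d : Fin n → ℝ) :
    ∃ x, lnorm r x ≤ 1 ∧ lnorm p (fun i => d i * x i) =
      (∑ i, |d i| ^ (1 / ((p⁻¹).toReal - (r⁻¹).toReal))) ^ ((p⁻¹).toReal - (r⁻¹).toReal) := by
  have hP : 0 < p.toReal := ENNReal.toReal_pos hp hpr.ne_top
  simp_rw [lnorm_of_ne_top hpr.ne_top]
  rcases eq_or_ne r ⊤ with rfl | hr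
  · refine ⟨1, (lnorm_top_le_one_iff _).2 fun i => by simp, ?_⟩
    rw [inv_top, toReal_zero, sub_zero, toReal_inv, one_div (p.toReal⁻¹), inv_inv, ← one_div]
    simp only [Pi.one_apply, mul_one]
  have hr0 : r ≠ 0 := (hp.bot_lt.trans hpr).ne'
  have hR : 0 < r.toReal := ENNReal.toReal_pos hr0 hr
  have hPR : p.toReal < r.toReal := (ENNReal.toReal_lt_toReal hpr.ne_top hr).2 hpr
  rw [toReal_inv, toReal_inv, one_div (_ - _)]
  rcases (sum_nonneg fun i _ => Real.rpow_nonneg (abs_nonneg (d i))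
    (p.toReal⁻¹ - r.toReal⁻¹)⁻¹).eq_or_lt with hS | hS
  · refine ⟨0, (lnorm_le_one_iff hr0 hr 0).2 (by simp [Real.zero_rpow hR.ne']), ?_⟩
    rw [← hS, Real.zero_rpow (sub_pos.2 (inv_strictAnti₀ hP hPR)).ne']
    simp [Real.zero_rpow hP.ne', Real.zero_rpow (inv_ne_zero hP.ne')]
  · refine ⟨holderExtremal p.toReal r.toReal d,
      (lnorm_le_one_iff hr0 hr _).2 (sum_holderExtremal_rpow hR.ne' d hS.ne').le, ?_⟩
    rw [sum_abs_mul_holderExtremal_rpow hP hPR d hS, Real.rpow_mul_rpow_one_div hS.le hP.ne']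

end lnorm

theorem Matrix.mulVec_eq_of_apply_eq_ite {ι R : Type*} [Fintype ι] [DecidableEq ι]
    [NonUnitalNonAssocSemiring R] {A : Matrix ι ι R} {σ : ι → ι} {d : ι → R}
    (hA : ∀ i j, A i j = if j = σ i then d i else 0) (x : ι → R) :
    A *ᵥ x = fun i => d i * x (σ i) := by
  ext i
  simp [mulVec, dotProduct, hA, ite_mul]

theorem opNorm_eq_of_apply_eq_ite {n : ℕ} {p r : ℝ≥0∞} (hp : p ≠ 0) (hpr : p < r)
    {A : Matrix (Fin n) (Fin n) ℝ} (σ : Equiv.Perm (Fin n)) (d : Fin n → ℝ)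
    (hA : ∀ i j, A i j = if j = σ i then d i else 0) :
    opNorm r p A =
      (∑ i, |d i| ^ (1 / ((p⁻¹).toReal - (r⁻¹).toReal))) ^ ((p⁻¹).toReal - (r⁻¹).toReal) := by
  obtain ⟨y, hy, hdy⟩ := exists_lnorm_le_one_lnorm_mul_eq hp hpr d
  refine IsGreatest.csSup_eq ⟨⟨y ∘ σ.symm, by rwa [lnorm_comp_perm], ?_⟩, ?_⟩
  · simpa [mulVec_eq_of_apply_eq_ite hA] using hdy.symm
  rintro _ ⟨x, hx, rfl⟩
  rw [mulVec_eq_of_apply_eq_ite hA, ← lnorm_comp_perm r σ] at *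
  calc lnorm p (fun i => d i * (x ∘ σ) i)
      ≤ _ * lnorm r (x ∘ σ) := lnorm_mul_le_mul_lnorm hp hpr d (x ∘ σ)
    _ ≤ _ * 1 := by gcongr
    _ = _ := mul_one _

theorem Finset.sum_range_two_mul_comp_div_two {M : Type*} [AddCommMonoid M] (f : ℕ → M)
    (m : ℕ) : ∑ j ∈ range (2 * m), f (j / 2) = 2 • ∑ k ∈ range m, f k := by
  induction m with
  | zero => simp
  | succ m ih =>
    rw [show 2 * (m + 1) = 2 * m + 1 + 1 by ring, sum_range_succ, sum_range_succ, ih,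
      sum_range_succ, smul_add, two_nsmul (f m), show (2 * m + 1) / 2 = m by omega,
      show 2 * m / 2 = m by omega, add_assoc]

theorem toReal_inv_sub_toReal_inv_pos {p r : ℝ≥0∞} (hp : p ≠ 0) (hpr : p < r) :
    0 < (p⁻¹).toReal - (r⁻¹).toReal :=
  sub_pos.2 (ENNReal.toReal_strict_mono (inv_ne_top.2 hp) (ENNReal.inv_lt_inv.2 hpr))

section PairedMatrix

variable {n m : ℕ}

/-- The involution exchanging `2k` and `2k + 1` for every `k < m`. -/
def pairSwap (m : ℕ) (hn : 2 * m ≤ n) : Equiv.Perm (Fin n) :=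
  Function.Involutive.toPerm
    (fun i => ⟨if i.val < 2 * m then (if i.val % 2 = 0 then i.val + 1 else i.val - 1) else i.val,
      by split_ifs <;> omega⟩)
    (fun i => by ext; simp only; split_ifs <;> omega)

theorem pairSwap_val (hn : 2 * m ≤ n) (i : Fin n) :
    (pairSwap m hn i).val =
      if i.val < 2 * m then (if i.val % 2 = 0 then i.val + 1 else i.val - 1) else i.val :=
  rfl

def pairWeight (m : ℕ) (c : ℕ → ℝ) (i : Fin n) : ℝ :=
  if i.val < 2 * m then c (i.val / 2) else 0

theorem sum_pairWeight (hn : 2 * m ≤ n) (c : ℕ → ℝ) {g : ℝ → ℝ} (hg : g 0 = 0) :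
    ∑ i : Fin n, g (pairWeight m c i) = 2 * ∑ k ∈ range m, g (c k) := by
  refine (Fin.sum_univ_eq_sum_range (fun j => g (if j < 2 * m then c (j / 2) else 0)) n).trans ?_
  rw [← sum_subset (range_subset_range.2 hn) fun j _ hj => by
    rw [if_neg (by simpa using hj), hg]]
  rw [two_mul (∑ k ∈ range m, g (c k)), ← two_nsmul, ← sum_range_two_mul_comp_div_two]
  exact sum_congr rfl fun j hj => by rw [if_pos (mem_range.1 hj)]

theorem apply_eq_ite_pairSwap (hn : 2 * m ≤ n) {W : Matrix (Fin n) (Fin n) ℝ} (hW : W.IsSymm)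
    {c : ℕ → ℝ}
    (hsupp : ∀ i j : Fin n, W i j ≠ 0 → ∃ k : ℕ, k < m ∧
      ((i.val = 2 * k ∧ j.val = 2 * k + 1) ∨ (i.val = 2 * k + 1 ∧ j.val = 2 * k)))
    (hval : ∀ k : ℕ, k < m → ∀ i j : Fin n,
      i.val = 2 * k → j.val = 2 * k + 1 → W i j = c k) (i j : Fin n) :
    W i j = if j = pairSwap m hn i then pairWeight m c i else 0 := by
  have hsupp' : W i j ≠ 0 → i.val < 2 * m ∧ j = pairSwap m hn i := by
    intro h
    obtain ⟨k, hk, hij | hij⟩ := hsupp i j h <;>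
    exact ⟨by omega, Fin.ext (by rw [pairSwap_val]; split_ifs <;> omega)⟩
  have hpair : i.val < 2 * m → W i (pairSwap m hn i) = c (i.val / 2) := by
    intro hi
    have hσ := pairSwap_val hn i
    rcases Nat.even_or_odd' i.val with ⟨k, hk | hk⟩
    · exact hval k (by omega) _ _ hk (by simp only [hσ]; split_ifs <;> omega) |>.trans
        (by rw [hk, Nat.mul_div_cancel_left k two_pos])
    · rw [← hW.apply]
      exact hval k (by omega) _ _ (by simp only [hσ]; split_ifs <;> omega) hk |>.trans
        (by rw [hk]; congr 1; omega)
  split_ifs with hj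
  · subst hj
    unfold pairWeight
    split_ifs with hi
    · exact hpair hi
    · by_contra h
      exact hi (hsupp' h).1
  · by_contra h
    exact hj (hsupp' h).2

end PairedMatrix

/-- Indices are `0`-based: `c k` sits at positions `(2k, 2k+1)` and `(2k+1, 2k)`. -/
theorem opNorm_paired {n m : ℕ} (W : Matrix (Fin n) (Fin n) ℝ) (hW : W.IsSymm)
    (c : ℕ → ℝ) (hn : 2 * m ≤ n)
    (r p : ℝ≥0∞) (hp : 1 ≤ p) (hpr : p < r)
    (hsupp : ∀ i j : Fin n, W i j ≠ 0 → ∃ k : ℕ, k < m ∧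
      ((i.val = 2 * k ∧ j.val = 2 * k + 1) ∨ (i.val = 2 * k + 1 ∧ j.val = 2 * k)))
    (hval : ∀ k : ℕ, k < m → ∀ i j : Fin n,
      i.val = 2 * k → j.val = 2 * k + 1 → W i j = c k) :
    opNorm r p W =
      (2 * ∑ k ∈ Finset.range m, |c k| ^ (1 / ((p⁻¹).toReal - (r⁻¹).toReal)))
        ^ ((p⁻¹).toReal - (r⁻¹).toReal) := by
  have hp0 : p ≠ 0 := (zero_lt_one.trans_le hp).ne'
  have hγ := toReal_inv_sub_toReal_inv_pos hp0 hpr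
  rw [opNorm_eq_of_apply_eq_ite hp0 hpr (pairSwap m hn) (pairWeight m c)
    (apply_eq_ite_pairSwap hn hW hsupp hval), sum_pairWeight hn c (g := fun t => |t| ^ (1 / ((p⁻¹).toReal - (r⁻¹).toReal)))
    (by simp only [abs_zero]; exact Real.zero_rpow (one_div_pos.2 hγ).ne')]
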